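/- With the notation of the fractional Beatty setup: if q = 2, then r(N) ∈ {⌊p/2⌋, ⌈p/2⌉} for every positive integer N. -/

import Mathlib

/-!
Since `⌊n α⌋ = N` iff `N/α ≤ n < (N + 1)/α`, we get `r(N) = C(N + 1) - C(N)` with
`C(M) = ⌈M/α₁⌉ + ⌈M/α₂⌉`. As `M/α₁ + M/α₂ = Mp/2` and `M/α₁` is irrational,
`Mp/2 < C(M) < Mp/2 + 2`. Now `p` is odd, being coprime to `2`, so exactly one of `Np` and
`(N + 1)p` is even, and for that `M` the bound forces `C(M) = Mp/2 + 1`; the other value of `C`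
is one of two consecutive integers, hence `r(N) = (p ± 1)/2`.
-/

/-- The number of positive integers `n` with `⌊n·α + β⌋ = N`, i.e. the multiplicity
of `N` in the Beatty sequence `S(α,β)`. -/
noncomputable def beattyCount (α β : ℝ) (N : ℤ) : ℕ :=
  Nat.card {n : ℕ // 0 < n ∧ ⌊(n : ℝ) * α + β⌋ = N}

/-- `r(N)`: the number of pairs `(i, n)`, `i ∈ {1,2}`, `n ≥ 1`, with `⌊n·αᵢ⌋ = N`. -/
noncomputable def fracBeattyR (α₁ α₂ : ℝ) (N : ℤ) : ℕ :=
  beattyCount α₁ 0 N + beattyCount α₂ 0 N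

lemma beattyCount_eq_ceil_sub_ceil {α β : ℝ} (hα : 0 < α) {N : ℤ} (hN : β < N) :
    (beattyCount α β N : ℤ) = ⌈(N + 1 - β) / α⌉ - ⌈(N - β) / α⌉ := by
  have hpos : 0 < ⌈(N - β) / α⌉ := Int.ceil_pos.mpr (div_pos (by linarith) hα)
  have hmono : ⌈(N - β) / α⌉ ≤ ⌈(N + 1 - β) / α⌉ := Int.ceil_le_ceil (by gcongr; linarith)
  have hmem : ∀ n : ℕ, (0 < n ∧ ⌊(n : ℝ) * α + β⌋ = N) ↔
      n ∈ Finset.Ico ⌈(N - β) / α⌉.toNat ⌈(N + 1 - β) / α⌉.toNat := by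
    intro n
    have hl : ⌈(N - β) / α⌉.toNat ≤ n ↔ (N - β) / α ≤ n := by
      rw [← Int.cast_natCast (R := ℝ) n, ← Int.ceil_le]; omega
    have hr : n < ⌈(N + 1 - β) / α⌉.toNat ↔ n < (N + 1 - β) / α := by
      rw [← Int.cast_natCast (R := ℝ) n, ← Int.lt_ceil]; omega
    rw [Finset.mem_Ico, hl, hr, Int.floor_eq_iff, div_le_iff₀ hα, lt_div_iff₀ hα]
    constructor
    · rintro ⟨-, h₁, h₂⟩
      constructor <;> linarith
    · rintro ⟨h₁, h₂⟩
      refine ⟨Nat.cast_pos.mp (pos_of_mul_pos_left ?_ hα.le), by linarith, by linarith⟩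
      linarith
  rw [beattyCount, Nat.card_congr (Equiv.subtypeEquivRight hmem), Nat.card_eq_finsetCard,
    Nat.card_Ico]
  omega

lemma fracBeattyR_eq_ceil_sub_ceil {α₁ α₂ : ℝ} (h₁ : 0 < α₁) (h₂ : 0 < α₂) {N : ℤ}
    (hN : 0 < N) :
    (fracBeattyR α₁ α₂ N : ℤ) =
      (⌈(N + 1 : ℝ) / α₁⌉ + ⌈(N + 1 : ℝ) / α₂⌉) - (⌈(N : ℝ) / α₁⌉ + ⌈(N : ℝ) / α₂⌉) := by
  have hN' : (0 : ℝ) < N := Int.cast_pos.mpr hN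
  rw [fracBeattyR, Nat.cast_add, beattyCount_eq_ceil_sub_ceil h₁ hN',
    beattyCount_eq_ceil_sub_ceil h₂ hN']
  simp only [sub_zero]
  ring

lemma Irrational.add_lt_ceil_add_ceil {x : ℝ} (hx : Irrational x) (y : ℝ) :
    x + y < ⌈x⌉ + ⌈y⌉ := by
  have hlt : x < ⌈x⌉ := (Int.le_ceil x).lt_of_ne (hx.ne_int _)
  linarith [Int.le_ceil y]

lemma ceil_div_add_ceil_div_bounds {α₁ α₂ : ℝ} (hi : Irrational α₁) {p q : ℕ} (hq : 0 < q)
    (hsum : 1 / α₁ + 1 / α₂ = (p : ℝ) / q) {M : ℤ} (hM : M ≠ 0) :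
    M * p < q * (⌈(M : ℝ) / α₁⌉ + ⌈(M : ℝ) / α₂⌉) ∧
      q * (⌈(M : ℝ) / α₁⌉ + ⌈(M : ℝ) / α₂⌉) < M * p + 2 * q := by
  have hq' : (0 : ℝ) < q := Nat.cast_pos.mpr hq
  have hMs : (q : ℝ) * ((M : ℝ) / α₁ + M / α₂) = M * p := by
    rw [div_eq_mul_one_div (M : ℝ), div_eq_mul_one_div (M : ℝ) α₂, ← mul_add, hsum]
    field_simp
  have hlo := (hi.intCast_div hM).add_lt_ceil_add_ceil ((M : ℝ) / α₂)
  have hhi :=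
    add_lt_add (Int.ceil_lt_add_one ((M : ℝ) / α₁)) (Int.ceil_lt_add_one ((M : ℝ) / α₂))
  constructor
  · exact_mod_cast (by nlinarith : (M : ℝ) * p < q * (⌈(M : ℝ) / α₁⌉ + ⌈(M : ℝ) / α₂⌉))
  · exact_mod_cast (by nlinarith : (q : ℝ) * (⌈(M : ℝ) / α₁⌉ + ⌈(M : ℝ) / α₂⌉) < M * p + 2 * q)

theorem fractional_beatty_q_eq_two_general (p q : ℕ)
    (hpq : Nat.Coprime p q) (α₁ α₂ : ℝ) (h1 : 0 < α₁) (h2 : 0 < α₂)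
    (hi1 : Irrational α₁)
    (hsum : 1 / α₁ + 1 / α₂ = (p : ℝ) / q)
    (hq2 : q = 2) :
    ∀ N : ℤ, 1 ≤ N →
      (fracBeattyR α₁ α₂ N : ℤ) = ⌊(p : ℚ) / 2⌋ ∨
      (fracBeattyR α₁ α₂ N : ℤ) = ⌈(p : ℚ) / 2⌉ := by
  subst hq2
  intro N hN
  have hodd : p % 2 = 1 := Nat.odd_iff.mp (Nat.coprime_two_right.mp hpq)
  have hfloor : ⌊(p : ℚ) / 2⌋ = (p : ℤ) / 2 := mod_cast Rat.floor_natCast_div_natCast p 2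
  have hceil : ⌈(p : ℚ) / 2⌉ = -(-(p : ℤ) / 2) := mod_cast Rat.ceil_natCast_div_natCast p 2
  obtain ⟨hNlo, hNhi⟩ := ceil_div_add_ceil_div_bounds hi1 two_pos hsum (M := N) (by omega)
  obtain ⟨hSlo, hShi⟩ := ceil_div_add_ceil_div_bounds hi1 two_pos hsum (M := N + 1) (by omega)
  push_cast at hSlo hShi
  have hstep : (N + 1) * (p : ℤ) = N * p + p := by ring
  rw [fracBeattyR_eq_ceil_sub_ceil h1 h2 (by omega), hfloor, hceil]
  omega

theorem fractional_beatty_q_eq_two (p q : ℕ) (hp : 0 < p) (hq : 0 < q)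
    (hpq : Nat.Coprime p q) (α₁ α₂ : ℝ) (h1 : 0 < α₁) (h2 : 0 < α₂)
    (hi1 : Irrational α₁) (hi2 : Irrational α₂)
    (hsum : 1 / α₁ + 1 / α₂ = (p : ℝ) / q)
    (p₁ : ℕ) (hp₁ : p₁ < q)
    (hfr₁ : (p₁ : ℝ) / q < Int.fract (1 / α₁))
    (hfr₂ : Int.fract (1 / α₁) < ((p₁ : ℝ) + 1) / q)
    (hq2 : q = 2) :
    ∀ N : ℤ, 1 ≤ N →
      (fracBeattyR α₁ α₂ N : ℤ) = ⌊(p : ℚ) / 2⌋ ∨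
      (fracBeattyR α₁ α₂ N : ℤ) = ⌈(p : ℚ) / 2⌉ :=
  fractional_beatty_q_eq_two_general p q hpq α₁ α₂ h1 h2 hi1 hsum hq2
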